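/- Let v be a vertex of T and let S be the subtree of T consisting of v and all of its descendants, of height h(S). Then the vertex set of S is the union of at most ⌊log₂ h(S)⌋ + 1 memory intervals. In particular, if every internal vertex of T has at least two children, the vertex set of S is the union of O(log log |S|) memory intervals. -/

import Mathlib

namespace VEB

inductive OTree : Type where
  | node : List OTree → OTree

def OTree.children : OTree → List OTree
  | .node cs => cs

mutual
  def height : OTree → ℕ
    | .node cs => 1 + heightList cs
  def heightList : List OTree → ℕ
    | [] => 0
    | c :: cs => max (height c) (heightList cs)
end

def subtreeAt? : OTree → List ℕ → Option OTree
  | t, [] => some t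
  | t, i :: p =>
    match t.children[i]? with
    | some c => subtreeAt? c p
    | none => none

/-- `p` is (the path of) a vertex of `t`. -/
def IsVertex (t : OTree) (p : List ℕ) : Prop := (subtreeAt? t p).isSome

/-- `p` is a leaf of `t`. -/
def IsLeaf (t : OTree) (p : List ℕ) : Prop := subtreeAt? t p = some (.node [])

/-- All leaves of `t` are at the same depth (the bottom level). -/
def Uniform (t : OTree) : Prop := ∀ p, IsLeaf t p → p.length + 1 = height t

/-- The top `m+1` levels of `t` (the truncation of height `m+1`). -/
def trunc : ℕ → OTree → OTree
  | 0, _ => .node []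
  | m+1, t => .node (t.children.map (trunc m))

/-- Paths of the vertices at depth `m`, in left-to-right order. -/
def levelPaths : ℕ → OTree → List (List ℕ)
  | 0, _ => [[]]
  | m+1, t => (t.children.zipIdx.map fun ic => (levelPaths m ic.1).map (ic.2 :: ·)).flatten

/-- The level at which a tree of height `h` is cut: `max ⌊ε h⌋ 1`. -/
noncomputable def cutLevel (ε : ℝ) (h : ℕ) : ℕ := max ⌊ε * (h : ℝ)⌋₊ 1

/-- The van Emde Boas order of the vertex paths of `t` (with recursion fuel). -/
noncomputable def vEBAux (ε : ℝ) : ℕ → OTree → List (List ℕ)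
  | 0, _ => []
  | fuel+1, t =>
    if height t ≤ 1 then [[]]
    else
      let m := cutLevel ε (height t)
      vEBAux ε fuel (trunc (m - 1) t) ++
        ((levelPaths m t).map fun q =>
          match subtreeAt? t q with
          | some s => (vEBAux ε fuel s).map (q ++ ·)
          | none => []).flatten

/-- The van Emde Boas order `vEB_ε(t)` of the vertex paths of `t`. -/
noncomputable def vEB (ε : ℝ) (t : OTree) : List (List ℕ) := vEBAux ε (height t) t

/-- Position (index) of vertex `p` in the van Emde Boas order. -/
noncomputable def pos (ε : ℝ) (t : OTree) (p : List ℕ) : ℕ := (vEB ε t).idxOf p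

/-- `A` is a set of vertices occupying consecutive positions in `vEB_ε(t)`. -/
def MemInterval (ε : ℝ) (t : OTree) (A : Set (List ℕ)) : Prop :=
  ∃ i n, A = {p | p ∈ ((vEB ε t).drop i).take n}

/-- The vertices of the decomposition `D` of `t`: pairs `(p, k)` of the root path
and the height of a decomposition subtree (with recursion fuel). -/
noncomputable def decompAux (ε : ℝ) : ℕ → OTree → List (List ℕ × ℕ)
  | 0, _ => []
  | fuel+1, t =>
    if height t ≤ 1 then [([], 1)]
    else
      let m := cutLevel ε (height t)
      ([], height t) ::
        (decompAux ε fuel (trunc (m - 1) t) ++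
          ((levelPaths m t).map fun q =>
            match subtreeAt? t q with
            | some s => (decompAux ε fuel s).map fun r => (q ++ r.1, r.2)
            | none => []).flatten)

/-- The vertices of the decomposition `D` of `t`. -/
noncomputable def decompVerts (ε : ℝ) (t : OTree) : List (List ℕ × ℕ) :=
  decompAux ε (height t) t

/-- The children in the decomposition tree `D` of the decomposition vertex `(p, k)`:
the top tree followed by the bottom trees in left-to-right order. -/
noncomputable def dChildren (ε : ℝ) (t : OTree) (p : List ℕ) (k : ℕ) : List (List ℕ × ℕ) :=
  if k ≤ 1 then []
  else
    match subtreeAt? t p with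
    | some s =>
      (p, cutLevel ε k) ::
        (levelPaths (cutLevel ε k) s).map fun q => (p ++ q, k - cutLevel ε k)
    | none => []

/-- The decomposition subtree `(p, k)` contains the vertex `w` of `t`;
equivalently, the leaf `{w}` of `D` lies in the subtree of `D` rooted at `(p, k)`. -/
def DContains (p : List ℕ) (k : ℕ) (w : List ℕ) : Prop :=
  p <+: w ∧ w.length < p.length + k

/-- Vertex `v` is to the left of the branch with leaf `ℓ`. -/
def LeftOfBranch (v ℓ : List ℕ) : Prop := List.Lex (· < ·) v (ℓ.take v.length)

/-- Vertex `v` is to the right of the branch with leaf `ℓ`. -/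
def RightOfBranch (v ℓ : List ℕ) : Prop := List.Lex (· < ·) (ℓ.take v.length) v

/-- Every internal vertex of `t` has at least `a` children. -/
def MinArity (t : OTree) (a : ℕ) : Prop :=
  ∀ p s, subtreeAt? t p = some s → s.children ≠ [] → a ≤ s.children.length

/-- Every internal vertex of `t` has at most `b` children. -/
def MaxArity (t : OTree) (b : ℕ) : Prop :=
  ∀ p s, subtreeAt? t p = some s → s.children.length ≤ b

/-- `w` lies on the leftmost branch descending from `v` (always taking the leftmost child). -/
def OnLeftmostBranch (v w : List ℕ) : Prop :=
  v <+: w ∧ ∀ n (hn : n < w.length), v.length ≤ n → w.get ⟨n, hn⟩ = 0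

/-- `w` lies on the rightmost branch descending from `v` (always taking the rightmost child). -/
def OnRightmostBranch (t : OTree) (v w : List ℕ) : Prop :=
  v <+: w ∧ ∀ n (hn : n < w.length), v.length ≤ n →
    ∀ s, subtreeAt? t (w.take n) = some s → w.get ⟨n, hn⟩ + 1 = s.children.length

/-!
Induction on the height of `t`, along the recursive definition of `vEB ε t`, cut at level
`m = cutLevel ε (height t)`. If `v` lies in a bottom tree, whose order is a contiguous block of
`vEB ε t`, induction applies inside that bottom tree. If `v` lies in the top tree, the descendants
of `v` of depth `< m` are covered by induction in the top tree, and those of depth `≥ m` fill the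
bottom trees rooted below `v`, whose roots are consecutive at level `m`, hence one more interval.
Since all leaves have the same depth and `2 m ≤ height t`, the part of the subtree of `v` inside
the top tree has at most half its height, which pays for that extra interval.

If every internal vertex has at least two children, a subtree of height `h` has at least
`2 ^ (h - 1)` vertices, so `⌊log₂ h⌋ + 1 ≤ 4 (log log |S| + 1)`.
-/

@[simp] lemma children_node (cs : List OTree) : (OTree.node cs).children = cs := rfl

@[simp] lemma subtreeAt?_nil (t : OTree) : subtreeAt? t [] = some t := rfl

lemma subtreeAt?_cons (t : OTree) (i : ℕ) (p : List ℕ) :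
    subtreeAt? t (i :: p) = t.children[i]?.bind (subtreeAt? · p) := by
  rw [subtreeAt?]
  cases t.children[i]? <;> rfl

lemma subtreeAt?_append (t : OTree) (p q : List ℕ) :
    subtreeAt? t (p ++ q) = (subtreeAt? t p).bind (subtreeAt? · q) := by
  induction p generalizing t with
  | nil => rfl
  | cons i p ih =>
    simp only [List.cons_append, subtreeAt?_cons, Option.bind_assoc, ih]

lemma subtreeAt?_append_singleton (t : OTree) (p : List ℕ) (i : ℕ) :
    subtreeAt? t (p ++ [i]) = (subtreeAt? t p).bind (·.children[i]?) := by
  rw [subtreeAt?_append]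
  congr 1
  funext s
  rw [subtreeAt?_cons]
  cases s.children[i]? <;> rfl

lemma height_node (cs : List OTree) : height (.node cs) = 1 + heightList cs := by
  rw [height]

lemma one_le_height (t : OTree) : 1 ≤ height t := by
  cases t
  rw [height_node]
  omega

lemma height_le_heightList {c : OTree} {cs : List OTree} (h : c ∈ cs) :
    height c ≤ heightList cs := by
  induction cs with
  | nil => simp at h
  | cons a l ih =>
    rw [heightList]
    rcases List.mem_cons.1 h with rfl | h
    · exact le_max_left _ _
    · exact (ih h).trans (le_max_right _ _)

lemma heightList_mem {cs : List OTree} (h : cs ≠ []) : heightList cs ∈ cs.map height := by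
  induction cs with
  | nil => exact absurd rfl h
  | cons a l ih =>
    rw [heightList, List.map_cons]
    rcases eq_or_ne l [] with rfl | hl
    · simp [heightList]
    · rcases max_choice (height a) (heightList l) with hm | hm <;> rw [hm]
      · exact List.mem_cons_self
      · exact List.mem_cons_of_mem _ (ih hl)

lemma height_eq_one_iff {t : OTree} : height t = 1 ↔ t.children = [] := by
  rcases t with ⟨_ | ⟨c, cs⟩⟩
  · simp [height_node, heightList]
  · have := one_le_height c
    simp only [height_node, heightList, Nat.add_eq_left, max_eq_zero, children_node, reduceCtorEq,
      iff_false, not_and]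
    omega

lemma height_subtree_add_length_le {t s : OTree} {p : List ℕ} (h : subtreeAt? t p = some s) :
    height s + p.length ≤ height t := by
  induction p generalizing t with
  | nil => cases h; simp
  | cons i p ih =>
    rw [subtreeAt?_cons, Option.bind_eq_some_iff] at h
    obtain ⟨c, hc, hcs⟩ := h
    have hle := height_le_heightList (List.mem_of_getElem? hc)
    rcases t with ⟨cs⟩
    have := ih hcs
    rw [height_node, List.length_cons]
    simp only [children_node] at hle
    omega

lemma exists_isLeaf_length_add_one (t : OTree) : ∃ p, IsLeaf t p ∧ p.length + 1 = height t := by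
  induction hn : height t using Nat.strong_induction_on generalizing t with
  | _ n ih =>
    rcases t with ⟨cs⟩
    rcases eq_or_ne cs [] with rfl | hcs
    · exact ⟨[], rfl, by simp [← hn, height_node, heightList]⟩
    · obtain ⟨c, hc, hch⟩ := List.mem_map.1 (heightList_mem hcs)
      obtain ⟨i, hi⟩ := List.mem_iff_getElem?.1 hc
      rw [height_node] at hn
      obtain ⟨p, hp, hpl⟩ := ih (height c) (by omega) c rfl
      refine ⟨i :: p, ?_, by rw [List.length_cons]; omega⟩
      rw [IsLeaf, subtreeAt?_cons, children_node, hi]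
      exact hp

lemma isVertex_iff_exists {t : OTree} {p : List ℕ} : IsVertex t p ↔ ∃ s, subtreeAt? t p = some s :=
  Option.isSome_iff_exists

lemma isVertex_append_iff {t s : OTree} {p : List ℕ} (h : subtreeAt? t p = some s) (q : List ℕ) :
    IsVertex t (p ++ q) ↔ IsVertex s q := by
  rw [IsVertex, subtreeAt?_append, h, Option.bind_some, IsVertex]

lemma isVertex_cons_iff {t : OTree} {i : ℕ} {p : List ℕ} :
    IsVertex t (i :: p) ↔ ∃ c, t.children[i]? = some c ∧ IsVertex c p := by
  rw [IsVertex, subtreeAt?_cons]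
  cases t.children[i]? <;> simp [IsVertex]

lemma IsVertex.of_prefix {t : OTree} {p w : List ℕ} (hw : IsVertex t w) (hp : p <+: w) :
    IsVertex t p := by
  obtain ⟨q, rfl⟩ := hp
  rw [IsVertex, subtreeAt?_append] at hw
  cases h : subtreeAt? t p
  · simp [h] at hw
  · simp [IsVertex, h]

lemma IsVertex.length_lt {t : OTree} {p : List ℕ} (h : IsVertex t p) : p.length < height t := by
  obtain ⟨s, hs⟩ := isVertex_iff_exists.1 h
  have := height_subtree_add_length_le hs
  have := one_le_height s
  omega

lemma uniform_iff {t : OTree} :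
    Uniform t ↔ ∀ p s, subtreeAt? t p = some s → height s + p.length = height t := by
  refine ⟨fun hu p s hs => ?_, fun h p hp => ?_⟩
  · obtain ⟨q, hq, hql⟩ := exists_isLeaf_length_add_one s
    have := hu (p ++ q) (by rw [IsLeaf, subtreeAt?_append, hs, Option.bind_some]; exact hq)
    rw [List.length_append] at this
    omega
  · have := h p _ hp
    rw [height_node, heightList] at this
    omega

lemma Uniform.height_subtree {t s : OTree} {p : List ℕ} (hu : Uniform t)
    (h : subtreeAt? t p = some s) : height s + p.length = height t :=
  uniform_iff.1 hu p s h

lemma Uniform.subtree {t s : OTree} {p : List ℕ} (hu : Uniform t)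
    (h : subtreeAt? t p = some s) : Uniform s := by
  refine uniform_iff.2 fun q r hr => ?_
  have := hu.height_subtree (p := p ++ q) (by rw [subtreeAt?_append, h, Option.bind_some, hr])
  have := hu.height_subtree h
  rw [List.length_append] at *
  omega

lemma MinArity.subtree {t s : OTree} {p : List ℕ} {a : ℕ} (ha : MinArity t a)
    (h : subtreeAt? t p = some s) : MinArity s a := fun q r hr =>
  ha (p ++ q) r (by rw [subtreeAt?_append, h, Option.bind_some, hr])

lemma trunc_succ (k : ℕ) (t : OTree) : trunc (k + 1) t = .node (t.children.map (trunc k)) := by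
  rw [trunc]

lemma heightList_map_of_height_eq_min {f : OTree → OTree} {a : ℕ}
    (hf : ∀ c, height (f c) = min a (height c)) (cs : List OTree) :
    heightList (cs.map f) = min a (heightList cs) := by
  induction cs with
  | nil => simp [heightList]
  | cons c cs ih => rw [List.map_cons, heightList, heightList, ih, hf, min_max_distrib_left]

lemma height_trunc (k : ℕ) (t : OTree) : height (trunc k t) = min (k + 1) (height t) := by
  induction k generalizing t with
  | zero =>
    have := one_le_height t
    rw [trunc, height_node, heightList]
    omega
  | succ k ih =>
    rcases t with ⟨cs⟩
    rw [trunc_succ, height_node, height_node, children_node, heightList_map_of_height_eq_min ih]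
    omega

lemma subtreeAt?_trunc (k : ℕ) (t : OTree) (p : List ℕ) :
    subtreeAt? (trunc k t) p =
      if p.length ≤ k then (subtreeAt? t p).map (trunc (k - p.length)) else none := by
  induction p generalizing k t with
  | nil => simp
  | cons i p ih =>
    cases k with
    | zero => simp [trunc, subtreeAt?_cons]
    | succ k =>
      simp only [trunc_succ, subtreeAt?_cons, children_node, List.getElem?_map]
      cases t.children[i]? <;> simp [ih]

lemma isVertex_trunc_iff {k : ℕ} {t : OTree} {p : List ℕ} :
    IsVertex (trunc k t) p ↔ IsVertex t p ∧ p.length ≤ k := by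
  rw [IsVertex, subtreeAt?_trunc, IsVertex]
  split_ifs with h <;> simp [h]

lemma Uniform.trunc {t : OTree} (hu : Uniform t) {k : ℕ} (hk : k < height t) :
    Uniform (trunc k t) := by
  refine uniform_iff.2 fun p s hs => ?_
  rw [subtreeAt?_trunc] at hs
  split_ifs at hs with hp
  obtain ⟨r, hr, rfl⟩ := Option.map_eq_some_iff.1 hs
  have := hu.height_subtree hr
  rw [height_trunc, height_trunc]
  omega

lemma levelPaths_succ (k : ℕ) (t : OTree) :
    levelPaths (k + 1) t =
      (t.children.zipIdx.map fun ic => (levelPaths k ic.1).map (ic.2 :: ·)).flatten := by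
  rw [levelPaths]

lemma mem_levelPaths {k : ℕ} {t : OTree} {q : List ℕ} :
    q ∈ levelPaths k t ↔ IsVertex t q ∧ q.length = k := by
  induction k generalizing t q with
  | zero =>
    simp only [levelPaths, List.mem_singleton, List.length_eq_zero_iff, iff_and_self]
    rintro rfl
    rfl
  | succ k ih =>
    rcases q with _ | ⟨i, q⟩
    · simp [levelPaths_succ]
    · simp only [levelPaths_succ, List.mem_flatten, List.mem_map, Prod.exists,
        List.mk_mem_zipIdx_iff_getElem?, ↓existsAndEq, and_true, ih, List.cons.injEq,
        exists_eq_right_right, isVertex_cons_iff, List.length_cons, Nat.add_right_cancel_iff]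
      exact ⟨fun ⟨c, hc, hv, hl⟩ => ⟨⟨c, hc, hv⟩, hl⟩, fun ⟨⟨c, hc, hv⟩, hl⟩ => ⟨c, hc, hv, hl⟩⟩

lemma map_append_levelPaths_infix {t s : OTree} {v : List ℕ} (hv : subtreeAt? t v = some s)
    (k : ℕ) : (levelPaths k s).map (v ++ ·) <:+: levelPaths (v.length + k) t := by
  induction v generalizing t with
  | nil => cases hv; simp
  | cons i v ih =>
    rw [subtreeAt?_cons, Option.bind_eq_some_iff] at hv
    obtain ⟨c, hc, hcs⟩ := hv
    rw [List.length_cons, Nat.add_right_comm, levelPaths_succ]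
    have hblock := List.infix_of_mem_flatten (List.mem_map_of_mem (f := fun ic =>
      (levelPaths (v.length + k) ic.1).map (ic.2 :: ·)) (List.mk_mem_zipIdx_iff_getElem?.2 hc))
    simpa [List.map_map, Function.comp_def] using ((ih hcs).map (i :: ·)).trans hblock

lemma finite_setOf_isVertex (t : OTree) : {w | IsVertex t w}.Finite :=
  ((Set.finite_Iio (height t)).biUnion fun k _ => (levelPaths k t).finite_toSet).subset
    fun _ hw => Set.mem_biUnion (Set.mem_Iio.2 hw.length_lt) (mem_levelPaths.2 ⟨hw, rfl⟩)

lemma one_le_cutLevel (ε : ℝ) (h : ℕ) : 1 ≤ cutLevel ε h := le_max_right _ _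

lemma cutLevel_lt {ε : ℝ} (hε : ε < 1) {h : ℕ} (hh : 2 ≤ h) : cutLevel ε h < h := by
  refine max_lt ((Nat.floor_lt' (by omega)).2 ?_) (by omega)
  exact mul_lt_of_lt_one_left (by norm_cast; omega) hε

lemma two_mul_cutLevel_le {ε : ℝ} (hε : ε ≤ 1 / 2) {h : ℕ} (hh : 2 ≤ h) :
    2 * cutLevel ε h ≤ h := by
  have hfloor : ⌊ε * h⌋₊ ≤ h / 2 := by
    calc ⌊ε * h⌋₊ ≤ ⌊(h : ℝ) / (2 : ℕ)⌋₊ := Nat.floor_le_floor (by push_cast; nlinarith)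
      _ = h / 2 := Nat.floor_div_eq_div h 2
  rw [cutLevel]
  omega

section vEB

variable {ε : ℝ}

noncomputable def bottomOrder (ε : ℝ) (t : OTree) (q : List ℕ) : List (List ℕ) :=
  match subtreeAt? t q with
  | some s => (vEB ε s).map (q ++ ·)
  | none => []

noncomputable def bottomPart (ε : ℝ) (t : OTree) (k : ℕ) : List (List ℕ) :=
  ((levelPaths k t).map (bottomOrder ε t)).flatten

lemma vEBAux_succ (fuel : ℕ) (t : OTree) :
    vEBAux ε (fuel + 1) t =
      if height t ≤ 1 then [[]]
      else
        vEBAux ε fuel (trunc (cutLevel ε (height t) - 1) t) ++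
          ((levelPaths (cutLevel ε (height t)) t).map fun q =>
            match subtreeAt? t q with
            | some s => (vEBAux ε fuel s).map (q ++ ·)
            | none => []).flatten := by
  rw [vEBAux]

lemma vEBAux_congr (hε : ε < 1) {f₁ f₂ : ℕ} {t : OTree} (h₁ : height t ≤ f₁)
    (h₂ : height t ≤ f₂) : vEBAux ε f₁ t = vEBAux ε f₂ t := by
  have := one_le_height t
  induction f₁ generalizing f₂ t with
  | zero => omega
  | succ f₁ ih =>
    obtain ⟨f₂, rfl⟩ : ∃ f, f₂ = f + 1 := ⟨f₂ - 1, by omega⟩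
    rw [vEBAux_succ, vEBAux_succ]
    split_ifs with ht
    · rfl
    have hm := cutLevel_lt hε (by omega : 2 ≤ height t)
    congr 1
    · have := height_trunc (cutLevel ε (height t) - 1) t
      exact ih (by omega) (by omega) (one_le_height _)
    · refine congrArg List.flatten (List.map_congr_left fun q hq => ?_)
      cases hs : subtreeAt? t q with
      | none => rfl
      | some s =>
        have := height_subtree_add_length_le hs
        have := (mem_levelPaths.1 hq).2
        have := one_le_cutLevel ε (height t)
        dsimp only
        rw [ih (f₂ := f₂) (by omega) (by omega) (one_le_height s)]

lemma vEB_eq_append_bottomPart (hε : ε < 1) {t : OTree} (ht : 2 ≤ height t) :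
    vEB ε t =
      vEB ε (trunc (cutLevel ε (height t) - 1) t) ++ bottomPart ε t (cutLevel ε (height t)) := by
  have hm := cutLevel_lt hε ht
  rw [vEB, vEBAux_congr hε (f₂ := height t - 1 + 1) le_rfl (by omega), vEBAux_succ,
    if_neg (by omega)]
  congr 1
  · have := height_trunc (cutLevel ε (height t) - 1) t
    exact vEBAux_congr hε (by omega) le_rfl
  · refine congrArg List.flatten (List.map_congr_left fun q hq => ?_)
    rw [bottomOrder]
    cases hs : subtreeAt? t q with
    | none => rfl
    | some s =>
      have := height_subtree_add_length_le hs
      have := (mem_levelPaths.1 hq).2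
      have := one_le_cutLevel ε (height t)
      dsimp only
      rw [vEB, vEBAux_congr hε (by omega) le_rfl]

-- Membership in the bottom orders is a hypothesis so that `mem_vEB` can use this in its induction.
lemma mem_bottomPart_of {t : OTree} {k : ℕ}
    (h : ∀ q s, subtreeAt? t q = some s → q.length = k → ∀ r, r ∈ vEB ε s ↔ IsVertex s r)
    {w : List ℕ} : w ∈ bottomPart ε t k ↔ IsVertex t w ∧ k ≤ w.length := by
  simp only [bottomPart, List.mem_flatten, List.mem_map]
  constructor
  · rintro ⟨_, ⟨q, hq, rfl⟩, hw⟩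
    obtain ⟨hqv, hql⟩ := mem_levelPaths.1 hq
    obtain ⟨s, hs⟩ := isVertex_iff_exists.1 hqv
    rw [bottomOrder, hs] at hw
    obtain ⟨r, hr, rfl⟩ := List.mem_map.1 hw
    exact ⟨(isVertex_append_iff hs r).2 ((h q s hs hql r).1 hr), by simp [hql]⟩
  · rintro ⟨hw, hk⟩
    obtain ⟨s, hs⟩ := isVertex_iff_exists.1 (hw.of_prefix (List.take_prefix k w))
    have hql : (w.take k).length = k := by simp [hk]
    refine ⟨_, ⟨w.take k, mem_levelPaths.2 ⟨isVertex_iff_exists.2 ⟨s, hs⟩, hql⟩, rfl⟩, ?_⟩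
    rw [bottomOrder, hs]
    refine List.mem_map.2 ⟨w.drop k, (h _ s hs hql _).2 ?_, List.take_append_drop k w⟩
    rwa [← isVertex_append_iff hs, List.take_append_drop]

lemma mem_vEB (hε : ε < 1) (t : OTree) (p : List ℕ) : p ∈ vEB ε t ↔ IsVertex t p := by
  induction hn : height t using Nat.strong_induction_on generalizing t p with
  | _ n ih =>
    subst hn
    rcases Nat.lt_or_ge (height t) 2 with ht | ht
    · have h1 : height t = 1 := by have := one_le_height t; omega
      rw [vEB, h1, vEBAux_succ, if_pos h1.le, List.mem_singleton]
      rcases p with _ | ⟨i, p⟩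
      · simp [IsVertex]
      · simp [isVertex_cons_iff, height_eq_one_iff.1 h1]
    · have hm := cutLevel_lt hε ht
      have := one_le_cutLevel ε (height t)
      have := height_trunc (cutLevel ε (height t) - 1) t
      have hbottom : ∀ q s, subtreeAt? t q = some s → q.length = cutLevel ε (height t) →
          ∀ r, r ∈ vEB ε s ↔ IsVertex s r := fun q s hs hq r =>
        ih _ (by have := height_subtree_add_length_le hs; omega) s r rfl
      rw [vEB_eq_append_bottomPart hε ht, List.mem_append, ih _ (by omega) _ _ rfl,
        isVertex_trunc_iff, mem_bottomPart_of hbottom]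
      constructor
      · rintro (⟨hp, -⟩ | ⟨hp, -⟩) <;> exact hp
      · intro hp
        by_cases hpm : p.length < cutLevel ε (height t)
        · exact .inl ⟨hp, by omega⟩
        · exact .inr ⟨hp, by omega⟩

lemma mem_bottomPart (hε : ε < 1) {t : OTree} {k : ℕ} {w : List ℕ} :
    w ∈ bottomPart ε t k ↔ IsVertex t w ∧ k ≤ w.length :=
  mem_bottomPart_of fun _ s _ _ r => mem_vEB hε s r

lemma bottomPart_zero (t : OTree) : bottomPart ε t 0 = vEB ε t := by
  simp [bottomPart, levelPaths, bottomOrder]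

lemma bottomOrder_append {t s : OTree} {v : List ℕ} (hv : subtreeAt? t v = some s)
    (r : List ℕ) : bottomOrder ε t (v ++ r) = (bottomOrder ε s r).map (v ++ ·) := by
  rw [bottomOrder, bottomOrder, subtreeAt?_append, hv, Option.bind_some]
  cases subtreeAt? s r <;> simp [List.map_map, Function.comp_def]

lemma map_append_bottomPart_infix {t s : OTree} {v : List ℕ} (hv : subtreeAt? t v = some s)
    (k : ℕ) : (bottomPart ε s k).map (v ++ ·) <:+: bottomPart ε t (v.length + k) := by
  have hcomm : List.map (v ++ ·) ∘ bottomOrder ε s = bottomOrder ε t ∘ (v ++ ·) :=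
    funext fun r => (bottomOrder_append hv r).symm
  rw [bottomPart, List.map_flatten, List.map_map, hcomm, ← List.map_map]
  exact ((map_append_levelPaths_infix hv k).map _).flatten

lemma map_append_vEB_infix_bottomPart {t u : OTree} {q : List ℕ} (hq : subtreeAt? t q = some u) :
    (vEB ε u).map (q ++ ·) <:+: bottomPart ε t q.length := by
  simpa [bottomPart_zero] using map_append_bottomPart_infix (ε := ε) hq 0

end vEB

section UnionOfInfixes

variable {α β : Type*}

def IsUnionOfInfixes (M : List α) (n : ℕ) (S : Set α) : Prop :=
  ∃ Ls : List (List α), Ls.length ≤ n ∧ (∀ L ∈ Ls, L <:+: M) ∧ S = {x | ∃ L ∈ Ls, x ∈ L}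

lemma isUnionOfInfixes_self (M : List α) : IsUnionOfInfixes M 1 {x | x ∈ M} :=
  ⟨[M], le_rfl, by simp, by simp⟩

namespace IsUnionOfInfixes

variable {M M' : List α} {n n' : ℕ} {S S' : Set α}

lemma mono (h : IsUnionOfInfixes M n S) (hn : n ≤ n') : IsUnionOfInfixes M n' S :=
  let ⟨Ls, hlen, hinf, hS⟩ := h
  ⟨Ls, hlen.trans hn, hinf, hS⟩

lemma of_isInfix (h : IsUnionOfInfixes M n S) (hM : M <:+: M') : IsUnionOfInfixes M' n S :=
  let ⟨Ls, hlen, hinf, hS⟩ := h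
  ⟨Ls, hlen, fun L hL => (hinf L hL).trans hM, hS⟩

lemma union (h : IsUnionOfInfixes M n S) (h' : IsUnionOfInfixes M n' S') :
    IsUnionOfInfixes M (n + n') (S ∪ S') := by
  obtain ⟨Ls, hlen, hinf, rfl⟩ := h
  obtain ⟨Ls', hlen', hinf', rfl⟩ := h'
  refine ⟨Ls ++ Ls', by rw [List.length_append]; omega,
    by simpa [or_imp, forall_and] using ⟨hinf, hinf'⟩, ?_⟩
  ext x
  simp [or_and_right, exists_or]

lemma image (h : IsUnionOfInfixes M n S) (f : α → β) :
    IsUnionOfInfixes (M.map f) n (f '' S) := by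
  obtain ⟨Ls, hlen, hinf, rfl⟩ := h
  refine ⟨Ls.map (List.map f), by simpa using hlen, ?_, ?_⟩
  · simpa using fun L hL => (hinf L hL).map f
  · ext y
    simp only [Set.mem_image, Set.mem_ofPred_eq, List.mem_map, exists_exists_and_eq_and]
    exact ⟨fun ⟨x, ⟨L, hL, hx⟩, hfx⟩ => ⟨L, hL, x, hx, hfx⟩,
      fun ⟨L, hL, x, hx, hfx⟩ => ⟨x, ⟨L, hL, hx⟩, hfx⟩⟩

end IsUnionOfInfixes

end UnionOfInfixes

lemma IsUnionOfInfixes.exists_memInterval {ε : ℝ} {t : OTree} {n : ℕ} {S : Set (List ℕ)}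
    (h : IsUnionOfInfixes (vEB ε t) n S) :
    ∃ (m : ℕ) (F : Fin m → Set (List ℕ)), m ≤ n ∧ (∀ i, MemInterval ε t (F i)) ∧
      S = ⋃ i, F i := by
  obtain ⟨Ls, hlen, hinf, rfl⟩ := h
  refine ⟨Ls.length, fun i => {x | x ∈ Ls[(i : ℕ)]}, hlen, fun i => ?_, ?_⟩
  · obtain ⟨a, b, hab⟩ := hinf _ (List.getElem_mem i.2)
    refine ⟨a.length, Ls[(i : ℕ)].length, ?_⟩
    rw [← hab, List.append_assoc, List.drop_left, List.take_left]
  · ext x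
    simp only [Set.mem_iUnion]
    constructor
    · rintro ⟨L, hL, hx⟩
      obtain ⟨i, hi, rfl⟩ := List.getElem_of_mem hL
      exact ⟨⟨i, hi⟩, hx⟩
    · rintro ⟨i, hx⟩
      exact ⟨_, List.getElem_mem _, hx⟩

def descendants (t : OTree) (v : List ℕ) : Set (List ℕ) := {w | IsVertex t w ∧ v <+: w}

lemma descendants_append {t u : OTree} {q : List ℕ} (hq : subtreeAt? t q = some u)
    (v : List ℕ) : descendants t (q ++ v) = (q ++ ·) '' descendants u v := by
  ext w
  constructor
  · rintro ⟨hw, r, rfl⟩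
    rw [List.append_assoc, isVertex_append_iff hq] at hw
    exact ⟨v ++ r, ⟨hw, List.prefix_append v r⟩, (List.append_assoc _ _ _).symm⟩
  · rintro ⟨r, ⟨hr, hvr⟩, rfl⟩
    exact ⟨(isVertex_append_iff hq r).2 hr, (List.prefix_append_right_inj q).2 hvr⟩

lemma descendants_nil {ε : ℝ} (hε : ε < 1) (t : OTree) :
    descendants t [] = {w | w ∈ vEB ε t} := by
  ext w
  simp [descendants, mem_vEB hε]

lemma descendants_eq_union_bottomPart {ε : ℝ} (hε : ε < 1) {t s : OTree} {v : List ℕ}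
    (hv : subtreeAt? t v = some s) {m : ℕ} (hvm : v.length < m) :
    descendants t v = descendants (trunc (m - 1) t) v ∪
      {w | w ∈ (bottomPart ε s (m - v.length)).map (v ++ ·)} := by
  ext w
  simp only [descendants, isVertex_trunc_iff, Set.mem_union, Set.mem_ofPred, List.mem_map,
    mem_bottomPart hε]
  constructor
  · rintro ⟨hw, r, rfl⟩
    by_cases hwm : (v ++ r).length ≤ m - 1
    · exact .inl ⟨⟨hw, hwm⟩, List.prefix_append v r⟩
    · refine .inr ⟨r, ⟨(isVertex_append_iff hv r).1 hw, ?_⟩, rfl⟩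
      simp only [List.length_append] at hwm
      omega
  · rintro (⟨⟨hw, -⟩, hvw⟩ | ⟨r, ⟨hr, -⟩, rfl⟩)
    · exact ⟨hw, hvw⟩
    · exact ⟨(isVertex_append_iff hv r).2 hr, List.prefix_append v r⟩

lemma vEB_infixes_of_two_le_height {ε : ℝ} (hε : ε < 1) {t : OTree} (ht : 2 ≤ height t) :
    vEB ε (trunc (cutLevel ε (height t) - 1) t) <:+: vEB ε t ∧
      bottomPart ε t (cutLevel ε (height t)) <:+: vEB ε t := by
  rw [vEB_eq_append_bottomPart hε ht]
  exact ⟨(List.prefix_append _ _).isInfix, (List.suffix_append _ _).isInfix⟩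

lemma IsUnionOfInfixes.descendants_of_lt_cutLevel {ε : ℝ} (hε : ε < 1) {t s : OTree}
    (ht : 2 ≤ height t) {v : List ℕ} (hv : subtreeAt? t v = some s)
    (hvm : v.length < cutLevel ε (height t)) {n : ℕ}
    (htop : IsUnionOfInfixes (vEB ε (trunc (cutLevel ε (height t) - 1) t)) n
      (descendants (trunc (cutLevel ε (height t) - 1) t) v)) :
    IsUnionOfInfixes (vEB ε t) (n + 1) (descendants t v) := by
  have hbottom : IsUnionOfInfixes (vEB ε t) 1
      {w | w ∈ (bottomPart ε s (cutLevel ε (height t) - v.length)).map (v ++ ·)} := by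
    refine (isUnionOfInfixes_self _).of_isInfix ((map_append_bottomPart_infix hv _).trans ?_)
    rw [Nat.add_sub_cancel' hvm.le]
    exact (vEB_infixes_of_two_le_height hε ht).2
  rw [descendants_eq_union_bottomPart hε hv hvm]
  exact (htop.of_isInfix (vEB_infixes_of_two_le_height hε ht).1).union hbottom

lemma IsUnionOfInfixes.descendants_of_cutLevel_le {ε : ℝ} (hε : ε < 1) {t u : OTree}
    (ht : 2 ≤ height t) {q : List ℕ} (hq : subtreeAt? t q = some u)
    (hqm : q.length = cutLevel ε (height t)) {n : ℕ} {v : List ℕ}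
    (h : IsUnionOfInfixes (vEB ε u) n (descendants u v)) :
    IsUnionOfInfixes (vEB ε t) n (descendants t (q ++ v)) := by
  rw [descendants_append hq]
  refine (h.image _).of_isInfix ((map_append_vEB_infix_bottomPart hq).trans ?_)
  rw [hqm]
  exact (vEB_infixes_of_two_le_height hε ht).2

theorem isUnionOfInfixes_descendants {ε : ℝ} (hε : ε ≤ 1 / 2) {t s : OTree} (hu : Uniform t)
    {v : List ℕ} (hv : subtreeAt? t v = some s) :
    IsUnionOfInfixes (vEB ε t) (Nat.log 2 (height s) + 1) (descendants t v) := by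
  have hε1 : ε < 1 := by linarith
  induction hn : height t using Nat.strong_induction_on generalizing t v s with
  | _ n ih =>
    subst hn
    rcases eq_or_ne v [] with rfl | hv0
    · rw [descendants_nil hε1]
      exact (isUnionOfInfixes_self _).mono (by omega)
    have ht : 2 ≤ height t := by
      have := (isVertex_iff_exists.2 ⟨s, hv⟩).length_lt
      have := List.length_pos_iff.2 hv0
      omega
    set m := cutLevel ε (height t)
    have hm := two_mul_cutLevel_le hε ht
    have hsv := hu.height_subtree hv
    rcases Nat.lt_or_ge v.length m with hvm | hvm
    · have htop : subtreeAt? (trunc (m - 1) t) v = some (trunc (m - 1 - v.length) s) := by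
        rw [subtreeAt?_trunc, if_pos (by omega), hv]
        rfl
      have htop_height := height_trunc (m - 1 - v.length) s
      have hlog : Nat.log 2 (height (trunc (m - 1 - v.length) s)) + 1 ≤ Nat.log 2 (height s) := by
        rw [← Nat.log_mul_base (by norm_num) (by omega)]
        exact Nat.log_mono_right (by omega)
      refine (IsUnionOfInfixes.descendants_of_lt_cutLevel hε1 ht hv hvm
        (ih _ ?_ (hu.trunc (by omega)) htop rfl)).mono (by omega)
      rw [height_trunc]
      omega
    · obtain ⟨u, hu', hus⟩ := Option.bind_eq_some_iff.1
        (by rwa [← subtreeAt?_append, List.take_append_drop] : (subtreeAt? t (v.take m)).bind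
          (subtreeAt? · (v.drop m)) = some s)
      have hqm : (v.take m).length = m := by rw [List.length_take, min_eq_left hvm]
      have hum := hu.height_subtree hu'
      have := one_le_cutLevel ε (height t)
      rw [← List.take_append_drop m v]
      exact (ih _ (by omega) (hu.subtree hu') hus rfl).descendants_of_cutLevel_le hε1 ht hu' hqm

lemma two_mul_ncard_level_le {t : OTree} (hu : Uniform t) (ha : MinArity t 2) {k : ℕ}
    (hk : k + 1 < height t) :
    2 * {q | IsVertex t q ∧ q.length = k}.ncard ≤ {q | IsVertex t q ∧ q.length = k + 1}.ncard := by
  set L := {q | IsVertex t q ∧ q.length = k}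
  have hfin : ∀ j, {q | IsVertex t q ∧ q.length = j}.Finite := fun _ =>
    (finite_setOf_isVertex t).subset fun q hq => hq.1
  have hchild : ∀ j < 2, (· ++ [j]) '' L ⊆ {q | IsVertex t q ∧ q.length = k + 1} := by
    rintro j hj _ ⟨q, ⟨hq, rfl⟩, rfl⟩
    obtain ⟨s, hs⟩ := isVertex_iff_exists.1 hq
    have hs2 : 2 ≤ height s := by have := hu.height_subtree hs; omega
    have hne : s.children ≠ [] := fun h => by rw [height_eq_one_iff.2 h] at hs2; omega
    have := ha q s hs hne
    refine ⟨?_, by simp⟩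
    rw [IsVertex, subtreeAt?_append_singleton, hs, Option.bind_some,
      List.getElem?_eq_getElem (by omega)]
    rfl
  have hdisj : Disjoint ((· ++ [0]) '' L) ((· ++ [1]) '' L) := by
    rw [Set.disjoint_left]
    rintro _ ⟨q, -, rfl⟩ ⟨q', -, h⟩
    simpa using congrArg List.getLast? h
  calc 2 * L.ncard = ((· ++ [0]) '' L ∪ (· ++ [1]) '' L).ncard := by
        rw [Set.ncard_union_eq hdisj ((hfin k).image _) ((hfin k).image _),
          Set.ncard_image_of_injective _ (List.append_left_injective _),
          Set.ncard_image_of_injective _ (List.append_left_injective _), two_mul]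
    _ ≤ _ := Set.ncard_le_ncard (Set.union_subset (hchild 0 (by norm_num)) (hchild 1 (by norm_num)))
        (hfin (k + 1))

lemma two_pow_le_ncard_level {t : OTree} (hu : Uniform t) (ha : MinArity t 2) {k : ℕ}
    (hk : k < height t) : 2 ^ k ≤ {q | IsVertex t q ∧ q.length = k}.ncard := by
  induction k with
  | zero =>
    have hroot : {q | IsVertex t q ∧ q.length = 0} = {[]} := by
      ext q
      simp only [List.length_eq_zero_iff, Set.mem_ofPred, Set.mem_singleton_iff,
        and_iff_right_iff_imp]
      rintro rfl
      rfl
    rw [pow_zero, hroot, Set.ncard_singleton]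
  | succ k ih =>
    calc 2 ^ (k + 1) = 2 * 2 ^ k := pow_succ' 2 k
      _ ≤ 2 * {q | IsVertex t q ∧ q.length = k}.ncard := by gcongr; exact ih (by omega)
      _ ≤ _ := two_mul_ncard_level_le hu ha hk

lemma two_pow_le_ncard_descendants {t s : OTree} (hu : Uniform t) (ha : MinArity t 2)
    {v : List ℕ} (hv : subtreeAt? t v = some s) :
    2 ^ (height s - 1) ≤ (descendants t v).ncard := by
  have hdesc : descendants t v = (v ++ ·) '' descendants s [] := by
    simpa using descendants_append hv []
  have hsub : {q | IsVertex s q ∧ q.length = height s - 1} ⊆ descendants s [] :=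
    fun q hq => ⟨hq.1, List.nil_prefix⟩
  calc 2 ^ (height s - 1) ≤ {q | IsVertex s q ∧ q.length = height s - 1}.ncard :=
        two_pow_le_ncard_level (hu.subtree hv) (ha.subtree hv) (by have := one_le_height s; omega)
    _ = ((v ++ ·) '' {q | IsVertex s q ∧ q.length = height s - 1}).ncard :=
        (Set.ncard_image_of_injective _ fun _ _ => List.append_cancel_left).symm
    _ ≤ (descendants t v).ncard :=
        Set.ncard_le_ncard (hdesc ▸ Set.image_mono hsub)
          ((finite_setOf_isVertex t).subset fun w hw => hw.1)

lemma two_thirds_mul_sub_half_le_log_log {x : ℝ} (k : ℕ) (hx : 2 ^ 2 ^ k ≤ x) :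
    2 / 3 * k - 1 / 2 ≤ Real.log (Real.log x) := by
  have hlog2 : 2 / 3 < Real.log 2 := by have := Real.log_two_gt_d9; linarith
  have hlogx : 2 ^ k * Real.log 2 ≤ Real.log x := by
    calc 2 ^ k * Real.log 2 = Real.log (2 ^ 2 ^ k) := by rw [Real.log_pow]; push_cast; ring
      _ ≤ Real.log x := Real.log_le_log (by positivity) hx
  have hloglog2 : -1 / 2 ≤ Real.log (Real.log 2) := by
    have := Real.one_sub_inv_le_log_of_pos (by linarith : 0 < Real.log 2)
    have := inv_anti₀ (by norm_num) hlog2.le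
    norm_num at this
    linarith
  calc 2 / 3 * k - 1 / 2 ≤ k * Real.log 2 + Real.log (Real.log 2) := by
        have : (0 : ℝ) ≤ k := Nat.cast_nonneg k
        nlinarith
    _ = Real.log (2 ^ k * Real.log 2) := by
        rw [Real.log_mul (by positivity) (by linarith), Real.log_pow]
    _ ≤ Real.log (Real.log x) := Real.log_le_log (by positivity) hlogx

lemma natLog_add_one_le_four_mul_log_log {h N : ℕ} (hN : 2 ^ (h - 1) ≤ N) :
    (Nat.log 2 h + 1 : ℝ) ≤ 4 * (Real.log (Real.log N) + 1) := by
  rcases Nat.lt_or_ge N 2 with hN2 | hN2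
  · have hh : h ≤ 1 := by
      by_contra hh
      have : 2 ^ 1 ≤ 2 ^ (h - 1) := Nat.pow_le_pow_right (by norm_num) (by omega)
      omega
    rw [Nat.log_of_lt (by omega)]
    interval_cases N <;> norm_num
  · set a := Nat.log 2 h
    have hk : 2 ^ 2 ^ (a - 1) ≤ N := by
      rcases Nat.eq_zero_or_pos a with ha | ha
      · simpa [ha] using hN2
      · have hpow : 2 ^ a ≤ h := Nat.pow_log_le_self 2 (by rintro rfl; simp [a] at ha)
        have : 2 ^ a = 2 * 2 ^ (a - 1) := by rw [← pow_succ']; congr 1; omega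
        exact le_trans (Nat.pow_le_pow_right (by norm_num) (by omega)) hN
    have := two_thirds_mul_sub_half_le_log_log (a - 1) (x := N) (by exact_mod_cast hk)
    have : (a : ℝ) ≤ ((a - 1 : ℕ) : ℝ) + 1 := by norm_cast; omega
    have : (0 : ℝ) ≤ ((a - 1 : ℕ) : ℝ) := Nat.cast_nonneg _
    linarith

/-- For a vertex `v` of `T`, the subtree `S` of all descendants of `v`
(of height `height s`, where `s` is the subtree of `t` at `v`) is the union of at most
`⌊log₂ (height s)⌋ + 1` memory intervals; in particular, if every internal vertex has at
least two children, it is the union of `O(log log |S|)` memory intervals. -/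
theorem subtree_few_memory_intervals :
    ∃ C : ℝ, 0 < C ∧
      ∀ (ε : ℝ), 0 < ε → ε ≤ 1/2 →
      ∀ (t : OTree), Uniform t →
      ∀ (v : List ℕ) (s : OTree), subtreeAt? t v = some s →
        (∃ (m : ℕ) (F : Fin m → Set (List ℕ)),
            m ≤ Nat.log 2 (height s) + 1 ∧
            (∀ i, MemInterval ε t (F i)) ∧
            {w | IsVertex t w ∧ v <+: w} = ⋃ i, F i) ∧
        (MinArity t 2 →
          ∃ (m : ℕ) (F : Fin m → Set (List ℕ)),
            (m : ℝ) ≤ C *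
              (Real.log (Real.log (Set.ncard {w | IsVertex t w ∧ v <+: w})) + 1) ∧
            (∀ i, MemInterval ε t (F i)) ∧
            {w | IsVertex t w ∧ v <+: w} = ⋃ i, F i) := by
  refine ⟨4, by norm_num, fun ε _ hε t hu v s hv => ?_⟩
  obtain ⟨m, F, hm, hF, hS⟩ := (isUnionOfInfixes_descendants hε hu hv).exists_memInterval
  refine ⟨⟨m, F, hm, hF, hS⟩, fun ha => ⟨m, F, ?_, hF, hS⟩⟩
  calc (m : ℝ) ≤ Nat.log 2 (height s) + 1 := by exact_mod_cast hm
    _ ≤ 4 * (Real.log (Real.log (descendants t v).ncard) + 1) :=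
        natLog_add_one_le_four_mul_log_log (two_pow_le_ncard_descendants hu ha hv)

end VEB
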